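/- arXiv:2302.03611 — 11 statements merged into one kernel-verified Lean document; each statement's English description precedes it below -/
import Mathlib

section
/- Let u be a generic ultrametric on n points. Then u admits no odd cycle of constant value: there do not exist an integer k ≥ 1, distinct indices x_0, x_1, …, x_{2k} in {1,…,n}, and a real number h such that u(x_a, x_{a+1 mod 2k+1}) = h for all a = 0, …, 2k. -/
/-- A symmetric function `u` on pairs of distinct indices satisfying the three-point
condition: the maximum of the three values on any triple of distinct indices is
attained at least twice. -/
def IsUltrametric {n : ℕ} (u : Fin n → Fin n → ℝ) : Prop :=
  (∀ i j, u i j = u j i) ∧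
  ∀ i j k : Fin n, i ≠ j → i ≠ k → j ≠ k →
    (u i j = u i k ∧ u j k ≤ u i j) ∨
    (u i j = u j k ∧ u i k ≤ u i j) ∨
    (u i k = u j k ∧ u i j ≤ u i k)

/-- An ultrametric is generic if no triple of distinct indices has all three
pairwise values equal. -/
def IsGenericUltrametric {n : ℕ} (u : Fin n → Fin n → ℝ) : Prop :=
  IsUltrametric u ∧
  ∀ i j k : Fin n, i ≠ j → i ≠ k → j ≠ k → ¬ (u i j = u i k ∧ u i k = u j k)

/-- A generic ultrametric admits no odd cycle of constant value: there is no `k ≥ 1`,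
no injective tuple of `2k+1` distinct indices `x₀, …, x_{2k}`, and no real `h` with
`u (x_a) (x_{a+1 mod 2k+1}) = h` for all `a`. -/
theorem stmt1 {n : ℕ} (u : Fin n → Fin n → ℝ) (hu : IsGenericUltrametric u) :
    ¬ ∃ (k : ℕ), 1 ≤ k ∧ ∃ (x : Fin (2 * k + 1) → Fin n), Function.Injective x ∧
      ∃ h : ℝ, ∀ a : Fin (2 * k + 1), u (x a) (x (a + 1)) = h := by
  rintro ⟨k, hk, x, hinj, h, hx⟩
  obtain ⟨⟨hsym, htri⟩, hgen⟩ := hu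
  have hN3 : 3 ≤ 2 * k + 1 := by omega
  have hNpos : 0 < 2 * k + 1 := by omega
  let f : ℕ → Fin (2 * k + 1) := fun m => ⟨m % (2 * k + 1), Nat.mod_lt _ hNpos⟩
  have fval : ∀ a : ℕ, (f a).val = a % (2 * k + 1) := fun a => rfl
  have fmod : ∀ a : ℕ, f (a % (2 * k + 1)) = f a := by
    intro a
    apply Fin.ext
    simp [fval, Nat.mod_mod_of_dvd]
  have fsucc : ∀ a : ℕ, f a + 1 = f (a + 1) := by
    intro a
    apply Fin.ext
    rw [Fin.val_add, fval, fval]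
    have h1 : ((1 : Fin (2 * k + 1))).val = 1 := by
      simp [Fin.val_one, Nat.mod_eq_of_lt (by omega : 1 < 2 * k + 1)]
    rw [h1, Nat.mod_add_mod]
  have hcyc : ∀ a : ℕ, u (x (f a)) (x (f (a + 1))) = h := by
    intro a
    rw [← fsucc a]
    exact hx (f a)
  have fne : ∀ a b : ℕ, a < 2 * k + 1 → b < 2 * k + 1 → a ≠ b → f a ≠ f b := by
    intro a b ha hb hab heq
    apply hab
    have := congrArg Fin.val heq
    rwa [fval, fval, Nat.mod_eq_of_lt ha, Nat.mod_eq_of_lt hb] at this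
  have fne' : ∀ a d : ℕ, 0 < d → d < 2 * k + 1 → f a ≠ f (a + d) := by
    intro a d hd hdN heq
    have hmod : a % (2 * k + 1) = (a + d) % (2 * k + 1) := congrArg Fin.val heq
    have hdvd : (2 * k + 1) ∣ (a + d) - a := (Nat.modEq_iff_dvd' (by omega)).mp hmod
    rw [Nat.add_sub_cancel_left] at hdvd
    exact absurd (Nat.le_of_dvd hd hdvd) (by omega)
  -- transitivity: small with small is small
  have T : ∀ i j l : Fin n, i ≠ j → i ≠ l → j ≠ l →
      u i j < h → u j l < h → u i l < h := by
    intro i j l hij hil hjl h1 h2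
    rcases htri i j l hij hil hjl with ⟨he, _⟩ | ⟨_, hle⟩ | ⟨he, _⟩
    · linarith [he]
    · linarith
    · linarith [he]
  -- step-two lemma
  have L2 : ∀ a : ℕ, u (x (f a)) (x (f (a + 2))) < h := by
    intro a
    have hij : f a ≠ f (a + 1) := fne' a 1 (by omega) (by omega)
    have hil : f a ≠ f (a + 2) := fne' a 2 (by omega) (by omega)
    have hjl : f (a + 1) ≠ f (a + 2) := fne' (a + 1) 1 (by omega) (by omega)
    have xij : x (f a) ≠ x (f (a + 1)) := fun e => hij (hinj e)
    have xil : x (f a) ≠ x (f (a + 2)) := fun e => hil (hinj e)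
    have xjl : x (f (a + 1)) ≠ x (f (a + 2)) := fun e => hjl (hinj e)
    have h1 : u (x (f a)) (x (f (a + 1))) = h := hcyc a
    have h2 : u (x (f (a + 1))) (x (f (a + 2))) = h := hcyc (a + 1)
    have hg := hgen (x (f a)) (x (f (a + 1))) (x (f (a + 2))) xij xil xjl
    rcases htri (x (f a)) (x (f (a + 1))) (x (f (a + 2))) xij xil xjl with
      ⟨he, _⟩ | ⟨_, hle⟩ | ⟨he, _⟩
    · exact absurd ⟨by rw [h1, ← he, h1], by rw [← he, h1, h2]⟩ hg
    · rcases lt_or_eq_of_le (by linarith : u (x (f a)) (x (f (a + 2))) ≤ h) with hlt | heq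
      · exact hlt
      · exact absurd ⟨by rw [h1, heq], by rw [heq, h2]⟩ hg
    · exact absurd ⟨by rw [h1, he, h2], by rw [he, h2]⟩ hg
  -- key induction
  have key : ∀ m : ℕ, 1 ≤ m → m ≤ k + 1 → u (x (f 0)) (x (f (2 * m))) < h := by
    intro m
    induction m with
    | zero => omega
    | succ p ih =>
      intro _ h2
      by_cases hp : p = 0
      · subst hp
        have := L2 0
        simpa using this
      · have hp1 : 1 ≤ p := by omega
        have hpk : p ≤ k := by omega
        have ihp := ih hp1 (by omega)
        have step : u (x (f (2 * p))) (x (f (2 * p + 2))) < h := L2 (2 * p)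
        have d1 : f 0 ≠ f (2 * p) := by
          have := fne' 0 (2 * p) (by omega) (by omega)
          simpa using this
        have d2 : f (2 * p) ≠ f (2 * p + 2) := fne' (2 * p) 2 (by omega) (by omega)
        have d3 : f 0 ≠ f (2 * p + 2) := by
          rcases Nat.lt_or_ge p k with hlt | hge
          · exact fne 0 (2 * p + 2) (by omega) (by omega) (by omega)
          · have he : f (2 * p + 2) = f 1 := by
              have hm : (2 * p + 2) % (2 * k + 1) = 1 := by
                have h21 : 2 * p + 2 = (2 * k + 1) + 1 := by omega
                rw [h21, Nat.add_mod_left, Nat.mod_eq_of_lt (by omega : 1 < 2 * k + 1)]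
              rw [← fmod (2 * p + 2), hm]
            rw [he]
            exact fne 0 1 (by omega) (by omega) (by omega)
        have trans := T (x (f 0)) (x (f (2 * p))) (x (f (2 * p + 2)))
          (fun e => d1 (hinj e)) (fun e => d3 (hinj e)) (fun e => d2 (hinj e)) ihp step
        have hdd : 2 * (p + 1) = 2 * p + 2 := by omega
        rw [hdd]
        exact trans
  have last := key (k + 1) (by omega) le_rfl
  have he : f (2 * (k + 1)) = f 1 := by
    have h1 : (2 * (k + 1)) % (2 * k + 1) = 1 := by
      have h21 : 2 * (k + 1) = (2 * k + 1) + 1 := by omega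
      rw [h21, Nat.add_mod_left, Nat.mod_eq_of_lt (by omega : 1 < 2 * k + 1)]
    rw [← fmod (2 * (k + 1)), h1]
  rw [he] at last
  have h01 : u (x (f 0)) (x (f 1)) = h := hcyc 0
  linarith
end

section
/- Let u and v be generic ultrametrics on n points, let λ ∈ ℝ, and define w(i,j) = max(u(i,j), λ + v(i,j)). Then there do not exist 5 distinct indices i_1, …, i_5 in {1,…,n} such that all 10 pairwise values w(i_a, i_b) (1 ≤ a < b ≤ 5) are equal. (Equivalently: no tree on the tropical line segment between two generic equidistant trees has an internal vertex with 5 or more children.) -/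
/-- The strong triangle inequality, derived from the three-point condition. -/
lemma ultra_le {n : ℕ} {u : Fin n → Fin n → ℝ} (h : IsUltrametric u)
    {i j k : Fin n} (hij : i ≠ j) (hik : i ≠ k) (hjk : j ≠ k) :
    u i k ≤ max (u i j) (u j k) := by
  rcases h.2 i j k hij hik hjk with ⟨h1, h2⟩ | ⟨h1, h2⟩ | ⟨h1, h2⟩
  · rw [← h1]; exact le_max_left _ _
  · exact le_trans h2 (le_max_left _ _)
  · rw [h1]; exact le_max_right _ _

/-- If a symmetric relation on `Fin 5` meets every triple of distinct points,
then some point is related to two distinct other points (a "cherry"). -/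
lemma cherry (E : Fin 5 → Fin 5 → Prop) (hsym : ∀ a b, E a b → E b a)
    (htri : ∀ a b c : Fin 5, a ≠ b → a ≠ c → b ≠ c → E a b ∨ E a c ∨ E b c) :
    ∃ a b c : Fin 5, a ≠ b ∧ a ≠ c ∧ b ≠ c ∧ E a b ∧ E a c := by
  by_contra hno
  push_neg at hno
  have hch : ∀ a b c : Fin 5, a ≠ b → a ≠ c → b ≠ c → E a b → E a c → False := by
    intro a b c h1 h2 h3 h4 h5
    exact hno a b c h1 h2 h3 h4 h5
  -- helper for the "disjoint edges" case
  have key : ∀ a b cc d x : Fin 5, a ≠ b → cc ≠ d → a ≠ cc → a ≠ d → b ≠ cc → b ≠ d →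
      x ≠ a → x ≠ b → x ≠ cc → x ≠ d → E a b → E cc d → False := by
    intro a b cc d x hab hcd hac had hbc hbd hxa hxb hxc hxd h1 h2
    rcases htri x a cc hxa hxc hac with h | h | h
    · exact hch a x b (Ne.symm hxa) hab hxb (hsym _ _ h) h1
    · exact hch cc x d (Ne.symm hxc) hcd hxd (hsym _ _ h) h2
    · exact hch a cc b hac hab (Ne.symm hbc) h h1
  have d01 : (0 : Fin 5) ≠ 1 := by decide
  rcases htri 0 1 2 (by decide) (by decide) (by decide) with h1 | h1 | h1 <;>
    rcases htri 0 3 4 (by decide) (by decide) (by decide) with h2 | h2 | h2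
  · exact hch 0 1 3 (by decide) (by decide) (by decide) h1 h2
  · exact hch 0 1 4 (by decide) (by decide) (by decide) h1 h2
  · exact key 0 1 3 4 2 (by decide) (by decide) (by decide) (by decide) (by decide)
      (by decide) (by decide) (by decide) (by decide) (by decide) h1 h2
  · exact hch 0 2 3 (by decide) (by decide) (by decide) h1 h2
  · exact hch 0 2 4 (by decide) (by decide) (by decide) h1 h2
  · exact key 0 2 3 4 1 (by decide) (by decide) (by decide) (by decide) (by decide)
      (by decide) (by decide) (by decide) (by decide) (by decide) h1 h2
  · exact key 1 2 0 3 4 (by decide) (by decide) (by decide) (by decide) (by decide)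
      (by decide) (by decide) (by decide) (by decide) (by decide) h1 h2
  · exact key 1 2 0 4 3 (by decide) (by decide) (by decide) (by decide) (by decide)
      (by decide) (by decide) (by decide) (by decide) (by decide) h1 h2
  · exact key 1 2 3 4 0 (by decide) (by decide) (by decide) (by decide) (by decide)
      (by decide) (by decide) (by decide) (by decide) (by decide) h1 h2


/-- No point on the tropical line segment between two generic equidistant trees has an
internal vertex with 5 or more children: for generic ultrametrics `u`, `v` and any `λ`,
the tropical combination `w i j = max (u i j) (λ + v i j)` never has 5 distinct indices
whose 10 pairwise values are all equal. -/
theorem stmt2 {n : ℕ} (u v : Fin n → Fin n → ℝ)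
    (hu : IsGenericUltrametric u) (hv : IsGenericUltrametric v) (lam : ℝ)
    (w : Fin n → Fin n → ℝ) (hw : ∀ i j, w i j = max (u i j) (lam + v i j)) :
    ¬ ∃ (ι : Fin 5 → Fin n) (c : ℝ), Function.Injective ι ∧
      ∀ a b : Fin 5, a ≠ b → w (ι a) (ι b) = c := by
  rintro ⟨ι, c, hinj, hc⟩
  have hne : ∀ a b : Fin 5, a ≠ b → ι a ≠ ι b := fun a b h hh => h (hinj hh)
  have hmax : ∀ a b : Fin 5, a ≠ b → max (u (ι a) (ι b)) (lam + v (ι a) (ι b)) = c := by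
    intro a b h; rw [← hw]; exact hc a b h
  have hule : ∀ a b : Fin 5, a ≠ b → u (ι a) (ι b) ≤ c := by
    intro a b h; rw [← hmax a b h]; exact le_max_left _ _
  have hvle : ∀ a b : Fin 5, a ≠ b → lam + v (ι a) (ι b) ≤ c := by
    intro a b h; rw [← hmax a b h]; exact le_max_right _ _
  have hcov : ∀ a b : Fin 5, a ≠ b → u (ι a) (ι b) = c ∨ lam + v (ι a) (ι b) = c := by
    intro a b h
    rcases max_choice (u (ι a) (ι b)) (lam + v (ι a) (ι b)) with h' | h' <;>
      rw [hmax a b h] at h'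
    · exact Or.inl h'.symm
    · exact Or.inr h'.symm
  -- E a b : u value strictly below c
  set E : Fin 5 → Fin 5 → Prop := fun a b => u (ι a) (ι b) < c with hE
  have hsym : ∀ a b, E a b → E b a := by
    intro a b h; simpa [hE, hu.1.1 (ι b) (ι a)] using h
  have htri : ∀ a b d : Fin 5, a ≠ b → a ≠ d → b ≠ d → E a b ∨ E a d ∨ E b d := by
    intro a b d hab had hbd
    by_contra h
    push_neg at h
    obtain ⟨h1, h2, h3⟩ := h
    have e1 : u (ι a) (ι b) = c := le_antisymm (hule a b hab) (not_lt.mp h1)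
    have e2 : u (ι a) (ι d) = c := le_antisymm (hule a d had) (not_lt.mp h2)
    have e3 : u (ι b) (ι d) = c := le_antisymm (hule b d hbd) (not_lt.mp h3)
    exact hu.2 (ι a) (ι b) (ι d) (hne a b hab) (hne a d had) (hne b d hbd)
      ⟨e1.trans e2.symm, e2.trans e3.symm⟩
  obtain ⟨a, b, d, hab, had, hbd, h1, h2⟩ := cherry E hsym htri
  -- E b d as well, by the strong triangle inequality
  have h3 : E b d := by
    have := ultra_le hu.1 (i := ι b) (j := ι a) (k := ι d)
      (hne b a (Ne.symm hab)) (hne b d hbd) (hne a d had)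
    have hba : u (ι b) (ι a) < c := hsym a b h1
    calc u (ι b) (ι d) ≤ max (u (ι b) (ι a)) (u (ι a) (ι d)) := this
      _ < c := max_lt hba h2
  -- so lam + v = c on all three pairs, contradicting genericity of v
  have q1 : lam + v (ι a) (ι b) = c := (hcov a b hab).resolve_left (ne_of_lt h1)
  have q2 : lam + v (ι a) (ι d) = c := (hcov a d had).resolve_left (ne_of_lt h2)
  have q3 : lam + v (ι b) (ι d) = c := (hcov b d hbd).resolve_left (ne_of_lt h3)
  have v1 : v (ι a) (ι b) = v (ι a) (ι d) := by linarith
  have v2 : v (ι a) (ι d) = v (ι b) (ι d) := by linarith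
  exact hv.2 (ι a) (ι b) (ι d) (hne a b hab) (hne a d had) (hne b d hbd) ⟨v1, v2⟩
end

section
/- Let u and v be generic ultrametrics on n points, let λ ∈ ℝ, and define w(i,j) = max(u(i,j), λ + v(i,j)). If there exist distinct indices i, j, k with w(i,j) = w(i,k) = w(j,k), then there exists a pair p among {i,j}, {i,k}, {j,k} such that u(p) = λ + v(p) (i.e., λ = u(p) − v(p)). In particular, if λ differs from u(p) − v(p) for every pair p of distinct indices, then w is generic. -/
/-- If the tropical combination `w i j = max (u i j) (λ + v i j)` of two generic
ultrametrics has a triple tie `w i j = w i k = w j k`, then `u p = λ + v p` for some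
pair `p` among `{i,j}, {i,k}, {j,k}`.  In particular, if `λ ≠ u p − v p` for every
pair `p` of distinct indices, then `w` is generic. -/
theorem stmt3 {n : ℕ} (u v : Fin n → Fin n → ℝ)
    (hu : IsGenericUltrametric u) (hv : IsGenericUltrametric v) (lam : ℝ)
    (w : Fin n → Fin n → ℝ) (hw : ∀ i j, w i j = max (u i j) (lam + v i j)) :
    (∀ i j k : Fin n, i ≠ j → i ≠ k → j ≠ k → w i j = w i k → w i k = w j k →
      u i j = lam + v i j ∨ u i k = lam + v i k ∨ u j k = lam + v j k) ∧
    ((∀ a b : Fin n, a ≠ b → lam ≠ u a b - v a b) →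
      ∀ i j k : Fin n, i ≠ j → i ≠ k → j ≠ k → ¬ (w i j = w i k ∧ w i k = w j k)) := by
  obtain ⟨⟨_, hu3⟩, hug⟩ := hu
  obtain ⟨⟨_, hv3⟩, hvg⟩ := hv
  have main : ∀ i j k : Fin n, i ≠ j → i ≠ k → j ≠ k → w i j = w i k → w i k = w j k →
      u i j = lam + v i j ∨ u i k = lam + v i k ∨ u j k = lam + v j k := by
    intro i j k hij hik hjk h1 h2
    by_contra hc
    push_neg at hc
    obtain ⟨hA, hB, hC⟩ := hc
    rw [hw, hw] at h1
    rw [hw, hw] at h2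
    rcases lt_or_gt_of_ne hA with hA | hA <;>
    rcases lt_or_gt_of_ne hB with hB | hB <;>
    rcases lt_or_gt_of_ne hC with hC | hC <;>
    (first
      | rw [max_eq_right hA.le] at h1
      | rw [max_eq_left hA.le] at h1) <;>
    (first
      | rw [max_eq_right hB.le] at h1 h2
      | rw [max_eq_left hB.le] at h1 h2) <;>
    (first
      | rw [max_eq_right hC.le] at h2
      | rw [max_eq_left hC.le] at h2) <;>
    rcases hu3 i j k hij hik hjk with ⟨e, f⟩ | ⟨e, f⟩ | ⟨e, f⟩ <;>
    rcases hv3 i j k hij hik hjk with ⟨e', f'⟩ | ⟨e', f'⟩ | ⟨e', f'⟩ <;>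
    first
      | linarith
      | exact hug i j k hij hik hjk ⟨by linarith, by linarith⟩
      | exact hvg i j k hij hik hjk ⟨by linarith, by linarith⟩
  refine ⟨main, ?_⟩
  rintro hlam i j k hij hik hjk ⟨h1, h2⟩
  rcases main i j k hij hik hjk h1 h2 with h | h | h
  · exact hlam i j hij (by linarith)
  · exact hlam i k hik (by linarith)
  · exact hlam j k hjk (by linarith)
end

section
/- Let u and v be generic ultrametrics on n points, λ ∈ ℝ, and w(i,j) = max(u(i,j), λ + v(i,j)). If there exist 6 distinct indices i_1, …, i_6 such that w(i_1,i_2) = w(i_1,i_3) = w(i_2,i_3) and w(i_4,i_5) = w(i_4,i_6) = w(i_5,i_6), then there exist a pair p contained in {i_1,i_2,i_3} and a pair q contained in {i_4,i_5,i_6} with u(p) = λ + v(p) and u(q) = λ + v(q); consequently u(p) − v(p) = u(q) − v(q). -/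
lemma key_tie {n : ℕ} (u v : Fin n → Fin n → ℝ)
    (hu : IsGenericUltrametric u) (hv : IsGenericUltrametric v) (lam : ℝ)
    (w : Fin n → Fin n → ℝ) (hw : ∀ i j, w i j = max (u i j) (lam + v i j))
    (i j k : Fin n) (hij : i ≠ j) (hik : i ≠ k) (hjk : j ≠ k)
    (h1 : w i j = w i k) (h2 : w i k = w j k) :
    ∃ a b : Fin n, a ≠ b ∧ ({a, b} : Set (Fin n)) ⊆ {i, j, k} ∧
      u a b = lam + v a b := by
  by_cases t1 : u i j = lam + v i j
  · exact ⟨i, j, hij, by intro x hx; simp at hx ⊢; tauto, t1⟩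
  by_cases t2 : u i k = lam + v i k
  · exact ⟨i, k, hik, by intro x hx; simp at hx ⊢; tauto, t2⟩
  by_cases t3 : u j k = lam + v j k
  · exact ⟨j, k, hjk, by intro x hx; simp at hx ⊢; tauto, t3⟩
  exfalso
  have f : ∀ a b : Fin n, w a b = w i j →
      (u a b ≤ w i j ∧ lam + v a b ≤ w i j ∧ (u a b = w i j ∨ lam + v a b = w i j)) := by
    intro a b hab
    rw [hw a b] at hab
    refine ⟨hab ▸ le_max_left _ _, hab ▸ le_max_right _ _, ?_⟩
    rcases max_choice (u a b) (lam + v a b) with h | h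
    · exact Or.inl (h ▸ hab)
    · exact Or.inr (h ▸ hab)
  obtain ⟨b1, b1', c1⟩ := f i j rfl
  obtain ⟨b2, b2', c2⟩ := f i k h1.symm
  obtain ⟨b3, b3', c3⟩ := f j k (by rw [← h2, ← h1])
  have HU := hu.1.2 i j k hij hik hjk
  have HV := hv.1.2 i j k hij hik hjk
  have GU := hu.2 i j k hij hik hjk
  have GV := hv.2 i j k hij hik hjk
  rcases c1 with c1 | c1 <;> rcases c2 with c2 | c2 <;> rcases c3 with c3 | c3
  · exact GU ⟨by linarith, by linarith⟩
  · -- u, u, v : v jk strictly biggest in v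
    have s1 : lam + v i j < w i j := lt_of_le_of_ne b1' (fun h => t1 (c1.trans h.symm))
    have s2 : lam + v i k < w i j := lt_of_le_of_ne b2' (fun h => t2 (c2.trans h.symm))
    rcases HV with ⟨e, l⟩ | ⟨e, l⟩ | ⟨e, l⟩ <;> linarith
  · -- u, v, u : v ik strictly biggest in v
    have s1 : lam + v i j < w i j := lt_of_le_of_ne b1' (fun h => t1 (c1.trans h.symm))
    have s3 : lam + v j k < w i j := lt_of_le_of_ne b3' (fun h => t3 (c3.trans h.symm))
    rcases HV with ⟨e, l⟩ | ⟨e, l⟩ | ⟨e, l⟩ <;> linarith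
  · -- u, v, v : u ij strictly biggest in u
    have s2 : u i k < w i j := lt_of_le_of_ne b2 (fun h => t2 (h.trans c2.symm))
    have s3 : u j k < w i j := lt_of_le_of_ne b3 (fun h => t3 (h.trans c3.symm))
    rcases HU with ⟨e, l⟩ | ⟨e, l⟩ | ⟨e, l⟩ <;> linarith
  · -- v, u, u : v ij strictly biggest in v
    have s2 : lam + v i k < w i j := lt_of_le_of_ne b2' (fun h => t2 (c2.trans h.symm))
    have s3 : lam + v j k < w i j := lt_of_le_of_ne b3' (fun h => t3 (c3.trans h.symm))
    rcases HV with ⟨e, l⟩ | ⟨e, l⟩ | ⟨e, l⟩ <;> linarith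
  · -- v, u, v : u ik strictly biggest in u
    have s1 : u i j < w i j := lt_of_le_of_ne b1 (fun h => t1 (h.trans c1.symm))
    have s3 : u j k < w i j := lt_of_le_of_ne b3 (fun h => t3 (h.trans c3.symm))
    rcases HU with ⟨e, l⟩ | ⟨e, l⟩ | ⟨e, l⟩ <;> linarith
  · -- v, v, u : u jk strictly biggest in u
    have s1 : u i j < w i j := lt_of_le_of_ne b1 (fun h => t1 (h.trans c1.symm))
    have s2 : u i k < w i j := lt_of_le_of_ne b2 (fun h => t2 (h.trans c2.symm))
    rcases HU with ⟨e, l⟩ | ⟨e, l⟩ | ⟨e, l⟩ <;> linarith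
  · exact GV ⟨by linarith, by linarith⟩

/-- If the tropical combination `w i j = max (u i j) (λ + v i j)` of two generic
ultrametrics has two triple ties on six distinct indices `ι 0, …, ι 5`, then there
are a pair `p` inside `{ι 0, ι 1, ι 2}` and a pair `q` inside `{ι 3, ι 4, ι 5}`
with `u p = λ + v p` and `u q = λ + v q`; consequently `u p − v p = u q − v q`. -/
theorem stmt4 {n : ℕ} (u v : Fin n → Fin n → ℝ)
    (hu : IsGenericUltrametric u) (hv : IsGenericUltrametric v) (lam : ℝ)
    (w : Fin n → Fin n → ℝ) (hw : ∀ i j, w i j = max (u i j) (lam + v i j))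
    (ι : Fin 6 → Fin n) (hι : Function.Injective ι)
    (h1 : w (ι 0) (ι 1) = w (ι 0) (ι 2)) (h1' : w (ι 0) (ι 2) = w (ι 1) (ι 2))
    (h2 : w (ι 3) (ι 4) = w (ι 3) (ι 5)) (h2' : w (ι 3) (ι 5) = w (ι 4) (ι 5)) :
    ∃ a b c d : Fin n, a ≠ b ∧ c ≠ d ∧
      ({a, b} : Set (Fin n)) ⊆ {ι 0, ι 1, ι 2} ∧
      ({c, d} : Set (Fin n)) ⊆ {ι 3, ι 4, ι 5} ∧
      u a b = lam + v a b ∧ u c d = lam + v c d ∧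
      u a b - v a b = u c d - v c d := by
  have d1 : ι 0 ≠ ι 1 := fun h => by simpa using hι h
  have d2 : ι 0 ≠ ι 2 := fun h => by simpa using hι h
  have d3 : ι 1 ≠ ι 2 := fun h => by simpa using hι h
  have d4 : ι 3 ≠ ι 4 := fun h => by simpa using hι h
  have d5 : ι 3 ≠ ι 5 := fun h => by simpa using hι h
  have d6 : ι 4 ≠ ι 5 := fun h => by simpa using hι h
  obtain ⟨a, b, hab, habs, habe⟩ := key_tie u v hu hv lam w hw _ _ _ d1 d2 d3 h1 h1'
  obtain ⟨c, d, hcd, hcds, hcde⟩ := key_tie u v hu hv lam w hw _ _ _ d4 d5 d6 h2 h2'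
  exact ⟨a, b, c, d, hab, hcd, habs, hcds, habe, hcde, by linarith⟩
end

section
/- Fix an integer n ≥ 1 and define, for 1 ≤ i < j ≤ n, u(i,j) = n·(n − i) and v(i,j) = j − 1. Then the map sending the pair (i,j) with i < j to the difference u(i,j) − v(i,j) = n(n − i) − j + 1 is injective on the set of pairs 1 ≤ i < j ≤ n. Consequently, the set Λ(u,v) = { u(i,j) − v(i,j) : 1 ≤ i < j ≤ n } of turning point scalars of the tropical line segment from u to v has cardinality binom(n,2). -/
/-- The caterpillar ultrametric `u(i,j) = n (n − min(i,j))` on leaf labels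
`{1, …, n}`; the leaf with label `i ∈ {1, …, n}` is the element `i - 1 : Fin n`. -/
noncomputable def uCat (n : ℕ) : Fin n → Fin n → ℝ :=
  fun i j => (n : ℝ) * ((n : ℝ) - ((min (i : ℕ) (j : ℕ) : ℝ) + 1))

/-- The caterpillar ultrametric `v(i,j) = max(i,j) − 1` on leaf labels
`{1, …, n}`; the leaf with label `i ∈ {1, …, n}` is the element `i - 1 : Fin n`. -/
noncomputable def vCat (n : ℕ) : Fin n → Fin n → ℝ :=
  fun i j => (max (i : ℕ) (j : ℕ) : ℝ)

lemma key (n : ℕ) : ∀ p q : Fin n × Fin n, p.1 < p.2 → q.1 < q.2 →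
      uCat n p.1 p.2 - vCat n p.1 p.2 = uCat n q.1 q.2 - vCat n q.1 q.2 → p = q := by
  rintro ⟨i₁, j₁⟩ ⟨i₂, j₂⟩ h1 h2 heq
  simp only [uCat, vCat] at heq
  have l1 : ((i₁ : ℕ) : ℝ) ≤ ((j₁ : ℕ) : ℝ) := by exact_mod_cast le_of_lt h1
  have l2 : ((i₂ : ℕ) : ℝ) ≤ ((j₂ : ℕ) : ℝ) := by exact_mod_cast le_of_lt h2
  rw [min_eq_left l1, max_eq_right l1, min_eq_left l2, max_eq_right l2] at heq
  -- heq : n*(n - (i₁+1)) - j₁ = n*(n - (i₂+1)) - j₂ over ℝ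
  have hkey : (n : ℝ) * ((i₂ : ℕ) - (i₁ : ℕ)) = ((j₁ : ℕ) : ℝ) - ((j₂ : ℕ) : ℝ) := by
    ring_nf at heq ⊢
    linarith
  have hj1 : ((j₁ : ℕ) : ℝ) < n := by exact_mod_cast j₁.2
  have hj2 : ((j₂ : ℕ) : ℝ) < n := by exact_mod_cast j₂.2
  have hj1' : (1 : ℝ) ≤ ((j₁ : ℕ) : ℝ) := by
    have h : (i₁ : ℕ) < (j₁ : ℕ) := h1
    have : 1 ≤ (j₁ : ℕ) := by omega
    exact_mod_cast this
  have hj2' : (1 : ℝ) ≤ ((j₂ : ℕ) : ℝ) := by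
    have h : (i₂ : ℕ) < (j₂ : ℕ) := h2
    have : 1 ≤ (j₂ : ℕ) := by omega
    exact_mod_cast this
  have hi : (i₁ : ℕ) = (i₂ : ℕ) := by
    rcases lt_trichotomy (i₁ : ℕ) (i₂ : ℕ) with h | h | h
    · exfalso
      have : (1 : ℝ) ≤ ((i₂ : ℕ) : ℝ) - ((i₁ : ℕ) : ℝ) := by
        have : (i₁ : ℕ) + 1 ≤ (i₂ : ℕ) := h
        have := (Nat.cast_le (α := ℝ)).mpr this
        push_cast at this; linarith
      nlinarith
    · exact h
    · exfalso
      have : (1 : ℝ) ≤ ((i₁ : ℕ) : ℝ) - ((i₂ : ℕ) : ℝ) := by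
        have : (i₂ : ℕ) + 1 ≤ (i₁ : ℕ) := h
        have := (Nat.cast_le (α := ℝ)).mpr this
        push_cast at this; linarith
      nlinarith
  have hj : (j₁ : ℕ) = (j₂ : ℕ) := by
    have : ((j₁ : ℕ) : ℝ) = ((j₂ : ℕ) : ℝ) := by
      rw [hi] at hkey; simp at hkey; linarith
    exact_mod_cast this
  simp [Prod.ext_iff, Fin.ext_iff, hi, hj]

/-- For `u(i,j) = n(n − min(i,j))` and `v(i,j) = max(i,j) − 1`, the map sending a pair
`i < j` to the difference `u(i,j) − v(i,j)` is injective, and consequently the set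
`Λ(u,v)` of turning point scalars of the tropical line segment from `u` to `v` has
cardinality `binom(n,2)`. -/
theorem stmt8 (n : ℕ) (hn : 1 ≤ n) :
    (∀ p q : Fin n × Fin n, p.1 < p.2 → q.1 < q.2 →
      uCat n p.1 p.2 - vCat n p.1 p.2 = uCat n q.1 q.2 - vCat n q.1 q.2 → p = q) ∧
    ((Finset.univ.filter fun p : Fin n × Fin n => p.1 < p.2).image
      (fun p => uCat n p.1 p.2 - vCat n p.1 p.2)).card = n.choose 2 := by
  refine ⟨key n, ?_⟩
  rw [Finset.card_image_of_injOn]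
  · rw [Finset.card_eq_sum_card_fiberwise (f := fun p : Fin n × Fin n => p.2)
      (t := Finset.univ) (fun x _ => Finset.mem_univ _)]
    have : ∀ j : Fin n,
        ((Finset.univ.filter fun p : Fin n × Fin n => p.1 < p.2).filter
          fun p => p.2 = j).card = (j : ℕ) := by
      intro j
      have : ((Finset.univ.filter fun p : Fin n × Fin n => p.1 < p.2).filter
          fun p => p.2 = j) = (Finset.Iio j).image fun i => (i, j) := by
        ext ⟨a, b⟩
        simp [Finset.mem_image, Finset.mem_Iio, and_comm]
        aesop
      rw [this, Finset.card_image_of_injective _ (by intro a b h; simpa using h)]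
      simp
    simp_rw [this]
    rw [Fin.sum_univ_eq_sum_range (fun i => i) n, Nat.choose_two_right, ← Finset.sum_range_id_mul_two,
      Nat.mul_div_cancel] <;> omega
  · intro p hp q hq h
    simp only [Finset.mem_coe, Finset.mem_filter] at hp hq
    exact key n p q hp.2 hq.2 h
end

section
/- Fix an integer n ≥ 1 and define, for distinct a, b in {1,…,n}, u(a,b) = n·(n − min(a,b)) and v(a,b) = max(a,b) − 1. Fix 1 ≤ i < j ≤ n, let λ = u(i,j) − v(i,j), and define w(a,b) = max(u(a,b), λ + v(a,b)). Then: (a) for every k with i < k < j, w(i,k) = w(k,j) = w(i,j); (b) for every k with k < i or k > j, w(j,k) > w(i,j); and (c) for all k_1, k_2 with i < k_1 < k_2 < j, w(k_1,k_2) < w(i,j). -/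
/-- Structure of the turning point `w = u ⊕ (λ ⊙ v)` of the tropical line segment
between `u(i,j) = n(n − min(i,j))` and `v(i,j) = max(i,j) − 1`, where
`λ = u(i,j) − v(i,j)` for a fixed pair `i < j`:
(a) `w i k = w k j = w i j` for all `i < k < j`;
(b) `w j k > w i j` whenever `k < i` or `k > j`; and
(c) `w k₁ k₂ < w i j` for all `i < k₁ < k₂ < j`. -/
theorem stmt9 (n : ℕ) (hn : 1 ≤ n) (i j : Fin n) (hij : i < j)
    (w : Fin n → Fin n → ℝ)
    (hw : ∀ a b, w a b = max (uCat n a b) ((uCat n i j - vCat n i j) + vCat n a b)) :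
    (∀ k : Fin n, i < k → k < j → w i k = w i j ∧ w k j = w i j) ∧
    (∀ k : Fin n, k < i ∨ j < k → w i j < w j k) ∧
    (∀ k₁ k₂ : Fin n, i < k₁ → k₁ < k₂ → k₂ < j → w k₁ k₂ < w i j) := by
  have hn' : (1:ℝ) ≤ (n:ℝ) := by exact_mod_cast hn
  have hijN : (i:ℕ) < (j:ℕ) := hij
  have hijR : ((i:ℕ):ℝ) < ((j:ℕ):ℝ) := by exact_mod_cast hijN
  have hwij : w i j = (n:ℝ) * ((n:ℝ) - (((i:ℕ):ℝ) + 1)) := by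
    rw [hw]
    simp only [uCat, vCat]
    rw [min_eq_left hijR.le, max_eq_right hijR.le, max_eq_left (by linarith)]
  refine ⟨?_, ?_, ?_⟩
  · intro k hik hkj
    have h1R : ((i:ℕ):ℝ) < ((k:ℕ):ℝ) := by exact_mod_cast (hik : (i:ℕ) < (k:ℕ))
    have h2R : ((k:ℕ):ℝ) < ((j:ℕ):ℝ) := by exact_mod_cast (hkj : (k:ℕ) < (j:ℕ))
    constructor
    · rw [hwij, hw]
      simp only [uCat, vCat]
      rw [min_eq_left h1R.le, max_eq_right h1R.le, min_eq_left hijR.le,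
        max_eq_right hijR.le, max_eq_left (by linarith)]
    · rw [hwij, hw]
      simp only [uCat, vCat]
      rw [min_eq_left h2R.le, max_eq_right h2R.le, min_eq_left hijR.le,
        max_eq_right hijR.le, max_eq_right (by nlinarith)]
      ring
  · intro k hk
    rw [hwij, hw]
    simp only [uCat, vCat]
    rw [min_eq_left hijR.le, max_eq_right hijR.le]
    rcases hk with hk | hk
    · have h1R : ((k:ℕ):ℝ) < ((i:ℕ):ℝ) := by exact_mod_cast (hk : (k:ℕ) < (i:ℕ))
      rw [min_eq_right (by linarith : ((k:ℕ):ℝ) ≤ ((j:ℕ):ℝ))]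
      refine lt_max_iff.mpr (Or.inl ?_)
      nlinarith
    · have h1R : ((j:ℕ):ℝ) < ((k:ℕ):ℝ) := by exact_mod_cast (hk : (j:ℕ) < (k:ℕ))
      rw [min_eq_left h1R.le, max_eq_right h1R.le]
      refine lt_max_iff.mpr (Or.inr ?_)
      linarith
  · intro k₁ k₂ hik1 h12 h2j
    have h1R : ((i:ℕ):ℝ) < ((k₁:ℕ):ℝ) := by exact_mod_cast (hik1 : (i:ℕ) < (k₁:ℕ))
    have h2R : ((k₁:ℕ):ℝ) < ((k₂:ℕ):ℝ) := by exact_mod_cast (h12 : (k₁:ℕ) < (k₂:ℕ))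
    have h3R : ((k₂:ℕ):ℝ) < ((j:ℕ):ℝ) := by exact_mod_cast (h2j : (k₂:ℕ) < (j:ℕ))
    rw [hwij, hw]
    simp only [uCat, vCat]
    rw [min_eq_left h2R.le, max_eq_right h2R.le, min_eq_left hijR.le, max_eq_right hijR.le]
    apply max_lt
    · nlinarith
    · linarith
end

section
/- Fix an integer n ≥ 1 and define, for distinct a, b in {1,…,n}, u(a,b) = n·(n − min(a,b)) and v(a,b) = max(a,b) − 1. Fix i with 1 ≤ i < n, let j = i + 1, let λ = u(i,j) − v(i,j), and define w(a,b) = max(u(a,b), λ + v(a,b)). Then w is generic: there are no distinct indices a, b, c in {1,…,n} with w(a,b) = w(a,c) = w(b,c). (That is, at the turning point of the tropical line segment from u to v with scalar λ_{i,i+1}, the tree topology is binary and no NNI move occurs.) -/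
/-- At the turning point of the tropical line segment between
`u(i,j) = n(n − min(i,j))` and `v(i,j) = max(i,j) − 1` with scalar
`λ = u(i, i+1) − v(i, i+1)` for consecutive leaves `i`, `j = i+1`, the intermediate
tree `w = u ⊕ (λ ⊙ v)` is generic: no triple of distinct indices has all three
pairwise values of `w` equal (the tree topology is binary and no NNI occurs). -/
theorem stmt10 (n : ℕ) (hn : 1 ≤ n) (i j : Fin n) (hij : (j : ℕ) = (i : ℕ) + 1)
    (w : Fin n → Fin n → ℝ)
    (hw : ∀ a b, w a b = max (uCat n a b) ((uCat n i j - vCat n i j) + vCat n a b)) :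
    ∀ a b c : Fin n, a ≠ b → a ≠ c → b ≠ c →
      ¬ (w a b = w a c ∧ w a c = w b c) := by
  have hsymm : ∀ x y : Fin n, w x y = w y x := by
    intro x y
    rw [hw, hw]
    simp only [uCat, vCat]
    rw [min_comm (((x : ℕ) : ℝ)) (((y : ℕ) : ℝ)), max_comm (((x : ℕ) : ℝ)) (((y : ℕ) : ℝ))]
  have key : ∀ a b c : Fin n, (a : ℕ) < (b : ℕ) → (b : ℕ) < (c : ℕ) →
      w a b = w a c → w a c = w b c → False := by
    intro a b c hab hbc h1 h2
    have hac : (a : ℕ) < (c : ℕ) := hab.trans hbc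
    rw [hw, hw] at h1
    rw [hw, hw] at h2
    simp only [uCat, vCat] at h1 h2
    rw [hij] at h1 h2
    push_cast at h1 h2
    have hN : (1 : ℝ) ≤ (n : ℝ) := by exact_mod_cast hn
    have hA : ((a : ℕ) : ℝ) ≥ 0 := by positivity
    have hI : ((i : ℕ) : ℝ) ≥ 0 := by positivity
    have hab' : ((a : ℕ) : ℝ) < ((b : ℕ) : ℝ) := by exact_mod_cast hab
    have hbc' : ((b : ℕ) : ℝ) < ((c : ℕ) : ℝ) := by exact_mod_cast hbc
    have hac' : ((a : ℕ) : ℝ) < ((c : ℕ) : ℝ) := hab'.trans hbc'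
    have imin : ((i : ℕ) : ℝ) ⊓ (((i : ℕ) : ℝ) + 1) = ((i : ℕ) : ℝ) :=
      min_eq_left (by linarith)
    have imax : ((i : ℕ) : ℝ) ⊔ (((i : ℕ) : ℝ) + 1) = ((i : ℕ) : ℝ) + 1 :=
      max_eq_right (by linarith)
    rw [min_eq_left hab'.le, min_eq_left hac'.le,
      max_eq_right hab'.le, max_eq_right hac'.le, imin, imax] at h1
    rw [min_eq_left hac'.le, min_eq_left hbc'.le,
      max_eq_right hac'.le, max_eq_right hbc'.le, imin, imax] at h2
    have hC : ((c : ℕ) : ℝ) ≤ (n : ℝ) - 1 := by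
      have := c.isLt
      have : ((c : ℕ) : ℝ) + 1 ≤ (n : ℝ) := by exact_mod_cast this
      linarith
    have hIn : ((i : ℕ) : ℝ) + 2 ≤ (n : ℝ) := by
      have := j.isLt
      rw [hij] at this
      exact_mod_cast this
    rcases le_or_gt ((i : ℕ) : ℝ) ((a : ℕ) : ℝ) with hia | hia
    · -- i ≤ a : both w a b, w a c equal λ + max
      have hIb : ((i : ℕ) : ℝ) + 1 ≤ ((b : ℕ) : ℝ) := by
        have : ((i : ℕ) : ℝ) < ((b : ℕ) : ℝ) := lt_of_le_of_lt hia hab'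
        have hib : (i : ℕ) < (b : ℕ) := by exact_mod_cast this
        exact_mod_cast hib
      have hmul : 0 ≤ (n : ℝ) * (((a : ℕ) : ℝ) - ((i : ℕ) : ℝ)) :=
        mul_nonneg (by linarith) (by linarith)
      rw [max_eq_right (by nlinarith), max_eq_right (by nlinarith)] at h1
      linarith
    · -- a < i
      have hia' : ((a : ℕ) : ℝ) + 1 ≤ ((i : ℕ) : ℝ) := by
        have : (a : ℕ) < (i : ℕ) := by exact_mod_cast hia
        exact_mod_cast this
      have h3 := h1.trans h2
      have hmul : (n : ℝ) * 1 ≤ (n : ℝ) * (((i : ℕ) : ℝ) - ((a : ℕ) : ℝ)) :=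
        mul_le_mul_of_nonneg_left (by linarith) (by linarith)
      have lt1 : (n : ℝ) * ((n : ℝ) - (((b : ℕ) : ℝ) + 1)) <
          (n : ℝ) * ((n : ℝ) - (((a : ℕ) : ℝ) + 1)) := by nlinarith
      have lt2 : (n : ℝ) * ((n : ℝ) - (((i : ℕ) : ℝ) + 1)) - (((i : ℕ) : ℝ) + 1)
          + ((c : ℕ) : ℝ) < (n : ℝ) * ((n : ℝ) - (((a : ℕ) : ℝ) + 1)) := by nlinarith
      have hlt := max_lt lt1 lt2
      have hle := le_max_left ((n : ℝ) * ((n : ℝ) - (((a : ℕ) : ℝ) + 1)))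
        ((n : ℝ) * ((n : ℝ) - (((i : ℕ) : ℝ) + 1)) - (((i : ℕ) : ℝ) + 1) + ((b : ℕ) : ℝ))
      linarith [h3, hlt, hle]
  intro a b c hab hac hbc ⟨h1, h2⟩
  rcases lt_trichotomy (a : ℕ) (b : ℕ) with hab1 | hab1 | hab1
  · rcases lt_trichotomy (b : ℕ) (c : ℕ) with hbc1 | hbc1 | hbc1
    · exact key a b c hab1 hbc1 h1 h2
    · exact hbc (Fin.ext hbc1)
    · rcases lt_trichotomy (a : ℕ) (c : ℕ) with hac1 | hac1 | hac1
      · exact key a c b hac1 hbc1 h1.symm ((h1.trans h2).trans (hsymm b c))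
      · exact hac (Fin.ext hac1)
      · exact key c a b hac1 hab1 ((hsymm c a).trans (h2.trans (hsymm b c)))
          ((hsymm c b).trans (h2.symm.trans h1.symm))
  · exact hab (Fin.ext hab1)
  · rcases lt_trichotomy (a : ℕ) (c : ℕ) with hac1 | hac1 | hac1
    · exact key b a c hab1 hac1 ((hsymm b a).trans (h1.trans h2)) h2.symm
    · exact hac (Fin.ext hac1)
    · rcases lt_trichotomy (b : ℕ) (c : ℕ) with hbc1 | hbc1 | hbc1
      · exact key b c a hbc1 hac1 (h2.symm.trans (h1.symm.trans (hsymm a b)))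
          ((hsymm b a).trans (h1.trans (hsymm a c)))
      · exact hbc (Fin.ext hbc1)
      · exact key c b a hbc1 hab1 ((hsymm c b).trans (h2.symm.trans (hsymm a c)))
          ((hsymm c a).trans (h1.symm.trans (hsymm a b)))
end

section
/- For every integer n ≥ 1, the central binomial coefficient satisfies 4^n / sqrt(π(n + 1/3)) ≤ binom(2n, n) ≤ 4^n / sqrt(π(n + 1/4)). -/
/-!
The sequence `f_c(n) = binom(2n, n)^2 (n + c) / 16^n` tends to `1/π` for every `c`: at `c = 1/2` it
is the reciprocal of twice the `n`-th Wallis product. Using `(n + 1) binom(2n+2, n+1) = 2 (2n + 1)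
binom(2n, n)`, the sign of `f_c(n + 1) - f_c(n)` is that of `(1 - 4c) n + (1 - 3c)`, so `f_{1/4}`
increases and `f_{1/3}` decreases to `1/π`. Hence `f_{1/4}(n) ≤ 1/π ≤ f_{1/3}(n)`, which are the two
bounds after taking square roots.
-/

open Filter Topology Real Nat

noncomputable def centralBinomSqScaled (c : ℝ) (n : ℕ) : ℝ :=
  (centralBinom n : ℝ) ^ 2 * (n + c) / 16 ^ n

namespace centralBinomSqScaled

theorem succ_sub (c : ℝ) (n : ℕ) :
    centralBinomSqScaled c (n + 1) - centralBinomSqScaled c n =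
      4 * (centralBinom n : ℝ) ^ 2 * ((1 - 4 * c) * n + (1 - 3 * c)) /
        (16 ^ (n + 1) * ((n : ℝ) + 1) ^ 2) := by
  have hrec : ((n : ℝ) + 1) * centralBinom (n + 1) = 2 * (2 * n + 1) * centralBinom n := by
    exact_mod_cast succ_mul_centralBinom_succ n
  unfold centralBinomSqScaled
  field_simp
  push_cast
  linear_combination ((n + 1) * (centralBinom (n + 1) : ℝ) + 2 * (2 * n + 1) * centralBinom n) *
    ((n + 1 + c) * 16 ^ n) * hrec

theorem monotone {c : ℝ} (hc : c ≤ 1 / 4) : Monotone (centralBinomSqScaled c) := by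
  refine monotone_nat_of_le_succ fun n ↦ sub_nonneg.mp ?_
  rw [succ_sub]
  have : 0 ≤ (1 - 4 * c) * n + (1 - 3 * c) := by
    nlinarith [(n.cast_nonneg : (0 : ℝ) ≤ n)]
  positivity

theorem antitone {c : ℝ} (hc : 1 / 3 ≤ c) : Antitone (centralBinomSqScaled c) := by
  refine antitone_nat_of_succ_le fun n ↦ sub_nonpos.mp ?_
  rw [succ_sub]
  have : (1 - 4 * c) * n + (1 - 3 * c) ≤ 0 := by
    nlinarith [(n.cast_nonneg : (0 : ℝ) ≤ n)]
  exact div_nonpos_of_nonpos_of_nonneg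
    (mul_nonpos_of_nonneg_of_nonpos (by positivity) this) (by positivity)

theorem half_eq_inv_wallis (n : ℕ) :
    centralBinomSqScaled (1 / 2) n = (2 * Wallis.W n)⁻¹ := by
  have hfact : (centralBinom n : ℝ) * n ! * n ! = (2 * n)! := by
    rw [centralBinom_eq_two_mul_choose, two_mul]
    exact_mod_cast add_choose_mul_factorial_mul_factorial n n
  rw [Wallis.W_eq_factorial_ratio, ← hfact, centralBinomSqScaled,
    show (16 : ℝ) ^ n = 2 ^ (4 * n) by rw [pow_mul]; norm_num]
  have : (centralBinom n : ℝ) ≠ 0 := by exact_mod_cast (centralBinom_pos n).ne'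
  field_simp

theorem tendsto (c : ℝ) : Tendsto (centralBinomSqScaled c) atTop (𝓝 π⁻¹) := by
  have hhalf : Tendsto (centralBinomSqScaled (1 / 2)) atTop (𝓝 π⁻¹) := by
    rw [funext half_eq_inv_wallis]
    convert (Wallis.tendsto_W_nhds_pi_div_two.const_mul 2).inv₀ (by positivity) using 2
    ring
  have hratio : Tendsto (fun n : ℕ ↦ (c + 1 * n) / (1 / 2 + 1 * n)) atTop (𝓝 1) := by
    simpa using tendsto_add_mul_div_add_mul_atTop_nhds c (1 / 2) (1 : ℝ) one_ne_zero
  convert hhalf.mul hratio using 1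
  · ext n
    unfold centralBinomSqScaled
    field_simp
    ring
  · rw [mul_one]

end centralBinomSqScaled

theorem centralBinom_mul_sqrt {c : ℝ} (n : ℕ) (hc : 0 ≤ (n : ℝ) + c) :
    centralBinom n * √(π * (n + c)) = 4 ^ n * √(π * centralBinomSqScaled c n) := by
  have h16 : (16 : ℝ) ^ n = (4 ^ n) ^ 2 := by rw [← pow_mul, mul_comm, pow_mul]; norm_num
  have hsq : π * centralBinomSqScaled c n = (centralBinom n * √(π * (n + c)) / 4 ^ n) ^ 2 := by
    rw [div_pow, mul_pow, sq_sqrt (by positivity), centralBinomSqScaled, h16]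
    ring
  rw [hsq, sqrt_sq (by positivity), mul_div_cancel₀ _ (by positivity)]

theorem stmt11_general (n : ℕ) :
    (4 : ℝ) ^ n / Real.sqrt (Real.pi * ((n : ℝ) + 1/3)) ≤ (Nat.choose (2 * n) n : ℝ) ∧
    (Nat.choose (2 * n) n : ℝ) ≤ (4 : ℝ) ^ n / Real.sqrt (Real.pi * ((n : ℝ) + 1/4)) := by
  have hupper : centralBinomSqScaled (1 / 4) n ≤ π⁻¹ :=
    (centralBinomSqScaled.monotone le_rfl).ge_of_tendsto (centralBinomSqScaled.tendsto _) n
  have hlower : π⁻¹ ≤ centralBinomSqScaled (1 / 3) n :=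
    (centralBinomSqScaled.antitone le_rfl).le_of_tendsto (centralBinomSqScaled.tendsto _) n
  rw [← centralBinom_eq_two_mul_choose]
  constructor
  · rw [div_le_iff₀ (by positivity), centralBinom_mul_sqrt n (by positivity)]
    refine le_mul_of_one_le_right (by positivity) (one_le_sqrt.mpr ?_)
    rwa [← inv_le_iff_one_le_mul₀' pi_pos]
  · rw [le_div_iff₀ (by positivity), centralBinom_mul_sqrt n (by positivity)]
    refine mul_le_of_le_one_right (by positivity) (sqrt_le_one.mpr ?_)
    simpa [pi_ne_zero] using mul_le_mul_of_nonneg_left hupper pi_pos.le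

/-- Bounds on the central binomial coefficient: for every `n ≥ 1`,
`4^n / √(π(n + 1/3)) ≤ binom(2n, n) ≤ 4^n / √(π(n + 1/4))`. -/
theorem stmt11 (n : ℕ) (hn : 1 ≤ n) :
    (4 : ℝ) ^ n / Real.sqrt (Real.pi * ((n : ℝ) + 1/3)) ≤ (Nat.choose (2 * n) n : ℝ) ∧
    (Nat.choose (2 * n) n : ℝ) ≤ (4 : ℝ) ^ n / Real.sqrt (Real.pi * ((n : ℝ) + 1/4)) :=
  stmt11_general n
end

section
/- For every integer n ≥ 1, the number of rooted binary planar trees with n unlabeled leaves, which equals (1/n)·binom(2n−2, n−1), satisfies 4^{n−1} / (n · sqrt(π(n − 2/3))) ≤ (1/n)·binom(2n−2, n−1) ≤ 4^{n−1} / (n · sqrt(π(n − 3/4))). -/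
/-!
The tree count is `C(2m, m) / (m + 1)` with `m = n - 1`. Put `r m = C(2m, m) / 4 ^ m`. Wallis'
formula gives `π r m ^ 2 (m + 1/2) → 1`, hence `π r m ^ 2 (m + c) → 1` for every `c`. Since
`r (m + 1) / r m = (2m + 1) / (2m + 2)`, the sequence `r m ^ 2 (m + 1/4)` increases and
`r m ^ 2 (m + 1/3)` decreases, so the first stays below and the second above their common
limit `1 / π`.
-/

open Filter Real Topology Nat

noncomputable def centralBinomRatio (m : ℕ) : ℝ := (m.centralBinom : ℝ) / 4 ^ m

lemma centralBinomRatio_pos (m : ℕ) : 0 < centralBinomRatio m := by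
  unfold centralBinomRatio
  have := m.centralBinom_pos
  positivity

lemma centralBinomRatio_succ_mul (m : ℕ) :
    centralBinomRatio (m + 1) * (2 * m + 2) = centralBinomRatio m * (2 * m + 1) := by
  have h : ((m : ℝ) + 1) * (m + 1).centralBinom = 2 * (2 * m + 1) * m.centralBinom := by
    exact_mod_cast m.succ_mul_centralBinom_succ
  unfold centralBinomRatio
  rw [pow_succ]
  field_simp
  linear_combination 2 * h

lemma centralBinomRatio_sq_mul (m : ℕ) :
    centralBinomRatio m ^ 2 * (2 * m + 1) = (Wallis.W m)⁻¹ := by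
  have h : (m.centralBinom : ℝ) * (m ! : ℝ) ^ 2 = (2 * m)! := by
    rw [Nat.centralBinom_eq_two_mul_choose, sq, ← mul_assoc]
    exact_mod_cast (two_mul m ▸ Nat.add_choose_mul_factorial_mul_factorial m m :)
  rw [Wallis.W_eq_factorial_ratio, inv_div, centralBinomRatio, div_pow, ← h,
    show 4 * m = 2 * m * 2 by ring, pow_mul, pow_mul]
  field_simp
  norm_num

lemma tendsto_natCast_add_div_natCast_add (a b : ℝ) :
    Tendsto (fun n : ℕ ↦ (n + a) / (n + b)) atTop (𝓝 1) := by
  have hb : Tendsto (fun n : ℕ ↦ (n : ℝ) + b) atTop atTop :=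
    tendsto_atTop_add_const_right _ b tendsto_natCast_atTop_atTop
  have h := (tendsto_natCast_div_add_atTop b).add ((tendsto_const_nhds (x := a)).div_atTop hb)
  simpa only [add_div, add_zero] using h

lemma tendsto_pi_mul_centralBinomRatio_sq_mul (c : ℝ) :
    Tendsto (fun m : ℕ ↦ π * (centralBinomRatio m ^ 2 * (m + c))) atTop (𝓝 1) := by
  have hW : Tendsto (fun m ↦ (π / 2) / Wallis.W m) atTop (𝓝 1) := by
    have h := (tendsto_const_nhds (x := π / 2)).div Wallis.tendsto_W_nhds_pi_div_two
      pi_div_two_pos.ne'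
    rwa [div_self pi_div_two_pos.ne'] at h
  have h := hW.mul (tendsto_natCast_add_div_natCast_add c (1 / 2))
  rw [one_mul] at h
  refine h.congr fun m ↦ ?_
  rw [div_eq_mul_inv _ (Wallis.W m), ← centralBinomRatio_sq_mul]
  field_simp

lemma centralBinomRatio_succ_sq_mul (m : ℕ) :
    centralBinomRatio (m + 1) ^ 2 * (2 * m + 2) ^ 2 =
      centralBinomRatio m ^ 2 * (2 * m + 1) ^ 2 := by
  rw [← mul_pow, ← mul_pow, centralBinomRatio_succ_mul]

lemma monotone_centralBinomRatio_sq_mul_add_quarter :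
    Monotone (fun m : ℕ ↦ centralBinomRatio m ^ 2 * (m + 1 / 4)) := by
  refine monotone_nat_of_le_succ fun m ↦ ?_
  have hpoly : ((m : ℝ) + 1 / 4) * (2 * m + 2) ^ 2 ≤ (2 * m + 1) ^ 2 * (m + 1 + 1 / 4) := by
    nlinarith
  have hstep := centralBinomRatio_succ_sq_mul m
  refine le_of_mul_le_mul_right ?_ (by positivity : (0 : ℝ) < (2 * m + 2) ^ 2)
  push_cast
  calc centralBinomRatio m ^ 2 * (m + 1 / 4) * (2 * m + 2) ^ 2
      ≤ centralBinomRatio m ^ 2 * ((2 * m + 1) ^ 2 * (m + 1 + 1 / 4)) := by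
        rw [mul_assoc]; gcongr
    _ = centralBinomRatio (m + 1) ^ 2 * (m + 1 + 1 / 4) * (2 * m + 2) ^ 2 := by
        linear_combination (-(m : ℝ) - 1 - 1 / 4) * hstep

lemma antitone_centralBinomRatio_sq_mul_add_third :
    Antitone (fun m : ℕ ↦ centralBinomRatio m ^ 2 * (m + 1 / 3)) := by
  refine antitone_nat_of_succ_le fun m ↦ ?_
  have hpoly : (2 * m + 1) ^ 2 * ((m : ℝ) + 1 + 1 / 3) ≤ (m + 1 / 3) * (2 * m + 2) ^ 2 := by
    nlinarith
  have hstep := centralBinomRatio_succ_sq_mul m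
  refine le_of_mul_le_mul_right ?_ (by positivity : (0 : ℝ) < (2 * m + 2) ^ 2)
  push_cast
  calc centralBinomRatio (m + 1) ^ 2 * (m + 1 + 1 / 3) * (2 * m + 2) ^ 2
      = centralBinomRatio m ^ 2 * ((2 * m + 1) ^ 2 * (m + 1 + 1 / 3)) := by
        linear_combination ((m : ℝ) + 1 + 1 / 3) * hstep
    _ ≤ centralBinomRatio m ^ 2 * (m + 1 / 3) * (2 * m + 2) ^ 2 := by
        rw [mul_assoc]; gcongr

lemma centralBinomRatio_mul_sqrt_le_one (m : ℕ) :
    centralBinomRatio m * √(π * (m + 1 / 4)) ≤ 1 := by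
  have h := (monotone_centralBinomRatio_sq_mul_add_quarter.const_mul pi_pos.le).ge_of_tendsto
    (tendsto_pi_mul_centralBinomRatio_sq_mul (1 / 4)) m
  rw [← sqrt_sq (centralBinomRatio_pos m).le, ← sqrt_mul' _ (by positivity)]
  exact sqrt_le_one.mpr (by linarith)

lemma one_le_centralBinomRatio_mul_sqrt (m : ℕ) :
    1 ≤ centralBinomRatio m * √(π * (m + 1 / 3)) := by
  have h := (antitone_centralBinomRatio_sq_mul_add_third.const_mul pi_pos.le).le_of_tendsto
    (tendsto_pi_mul_centralBinomRatio_sq_mul (1 / 3)) m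
  rw [← sqrt_sq (centralBinomRatio_pos m).le, ← sqrt_mul' _ (by positivity)]
  exact one_le_sqrt.mpr (by linarith)

lemma centralBinom_le_four_pow_div_sqrt (m : ℕ) :
    (m.centralBinom : ℝ) ≤ 4 ^ m / √(π * (m + 1 / 4)) := by
  have h := centralBinomRatio_mul_sqrt_le_one m
  rwa [centralBinomRatio, div_mul_eq_mul_div, div_le_one (by positivity),
    ← le_div_iff₀ (by positivity)] at h

lemma four_pow_div_sqrt_le_centralBinom (m : ℕ) :
    4 ^ m / √(π * (m + 1 / 3)) ≤ (m.centralBinom : ℝ) := by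
  have h := one_le_centralBinomRatio_mul_sqrt m
  rwa [centralBinomRatio, div_mul_eq_mul_div, one_le_div (by positivity),
    ← div_le_iff₀ (by positivity)] at h

/-- Bounds on the number `(1/n)·binom(2n−2, n−1)` of rooted binary planar trees with
`n` unlabeled leaves: for every `n ≥ 1`,
`4^(n−1) / (n √(π(n − 2/3))) ≤ (1/n)·binom(2n−2, n−1) ≤ 4^(n−1) / (n √(π(n − 3/4)))`. -/
theorem stmt12 (n : ℕ) (hn : 1 ≤ n) :
    (4 : ℝ) ^ (n - 1) / ((n : ℝ) * Real.sqrt (Real.pi * ((n : ℝ) - 2/3))) ≤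
      (1 / (n : ℝ)) * (Nat.choose (2 * n - 2) (n - 1) : ℝ) ∧
    (1 / (n : ℝ)) * (Nat.choose (2 * n - 2) (n - 1) : ℝ) ≤
      (4 : ℝ) ^ (n - 1) / ((n : ℝ) * Real.sqrt (Real.pi * ((n : ℝ) - 3/4))) := by
  obtain ⟨m, rfl⟩ : ∃ m, n = m + 1 := ⟨n - 1, by omega⟩
  rw [show 2 * (m + 1) - 2 = 2 * m by omega, Nat.add_sub_cancel,
    ← Nat.centralBinom_eq_two_mul_choose, one_div_mul_eq_div, div_mul_eq_div_div_swap,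
    div_mul_eq_div_div_swap]
  push_cast
  rw [show (m : ℝ) + 1 - 2 / 3 = m + 1 / 3 by ring,
    show (m : ℝ) + 1 - 3 / 4 = m + 1 / 4 by ring]
  exact ⟨by gcongr; exact four_pow_div_sqrt_le_centralBinom m,
    by gcongr; exact centralBinom_le_four_pow_div_sqrt m⟩
end

section
/- Let n ≥ 2 and let a, b ≥ 1 be integers with c := n − a − b ≥ 0. Define P(a,b;n) = [ (1/(a·b)) · binom(2a−2, a−1) · binom(2b−2, b−1) · binom(2c, c) ] / [ ((n−1)/n) · binom(2n−2, n−1) ]. Then P(a,b;n) ≤ (1/(2π)) · sqrt(n) / ( a · sqrt(a − 3/4) · b · sqrt(b − 3/4) · sqrt(c + 1/4) ). -/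
/-!
Write `C k` for the central binomial coefficient `(2k choose k)`. Wallis' partial products satisfy
`C k ^ 2 * (2k + 1) * W k = 16 ^ k`, so `W k ≤ π / 2` gives `16 ^ k ≤ π (k + 1/2) C k ^ 2`, while
`C k ^ 2 (k + 1/4) / 16 ^ k` increases to its limit `1 / π`, giving `π (k + 1/4) C k ^ 2 ≤ 16 ^ k`.
Squaring `P(a,b;n)` and inserting these bounds for `C (a-1)`, `C (b-1)`, `C c` and `C (n-1)` leaves
the elementary inequality `n (n - 1/2) ≤ 4 (n - 1) ^ 2` for `n ≥ 2`.
-/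

open Filter Topology Real Nat

namespace Nat

lemma centralBinom_sq_mul_W (k : ℕ) :
    (centralBinom k : ℝ) ^ 2 * (2 * k + 1) * Wallis.W k = 16 ^ k := by
  have hfact : (centralBinom k : ℝ) * k ! * k ! = (2 * k)! := by
    have h := choose_mul_factorial_mul_factorial (show k ≤ 2 * k by omega)
    rw [show 2 * k - k = k by omega, ← centralBinom_eq_two_mul_choose] at h
    exact_mod_cast h
  rw [Wallis.W_eq_factorial_ratio, ← hfact, pow_mul]
  have := factorial_pos k
  have := centralBinom_pos k
  field_simp
  norm_num

lemma sixteen_pow_div_le_centralBinom_sq (k : ℕ) :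
    16 ^ k / (π * (k + 1 / 2)) ≤ (centralBinom k : ℝ) ^ 2 := by
  rw [div_le_iff₀ (by positivity), ← centralBinom_sq_mul_W]
  have := Wallis.W_le k
  have : 0 ≤ (centralBinom k : ℝ) ^ 2 * (2 * k + 1) := by positivity
  nlinarith

lemma tendsto_centralBinom_sq_div_mul :
    Tendsto (fun k : ℕ => (centralBinom k : ℝ) ^ 2 / 16 ^ k * (k + 1 / 2)) atTop (𝓝 π⁻¹) := by
  have h := (Wallis.tendsto_W_nhds_pi_div_two.const_mul 2).inv₀ (by positivity)
  rw [mul_div_cancel₀ _ two_ne_zero] at h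
  refine h.congr fun k => ?_
  rw [← centralBinom_sq_mul_W]
  have := Wallis.W_pos k
  have := centralBinom_pos k
  field_simp

lemma tendsto_centralBinom_sq_div :
    Tendsto (fun k : ℕ => (centralBinom k : ℝ) ^ 2 / 16 ^ k) atTop (𝓝 0) := by
  refine (tendsto_centralBinom_sq_div_mul.div_atTop
    (tendsto_atTop_add_const_right _ (1 / 2) tendsto_natCast_atTop_atTop)).congr fun k => ?_
  field_simp

lemma monotone_centralBinom_sq_div_mul :
    Monotone fun k : ℕ => (centralBinom k : ℝ) ^ 2 / 16 ^ k * (k + 1 / 4) := by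
  refine monotone_nat_of_le_succ fun k => ?_
  have hsucc : ((k + 1 : ℕ) : ℝ) * centralBinom (k + 1) = 2 * (2 * k + 1) * centralBinom k := by
    exact_mod_cast succ_mul_centralBinom_succ k
  have hratio : (centralBinom (k + 1) : ℝ) ^ 2 / 16 ^ (k + 1)
      = (centralBinom k : ℝ) ^ 2 / 16 ^ k * ((2 * k + 1) ^ 2 / (4 * (k + 1) ^ 2)) := by
    rw [← mul_left_cancel_iff_of_pos (show (0 : ℝ) < ((k + 1 : ℕ) : ℝ) ^ 2 by positivity),
      ← mul_div_assoc, ← mul_pow, hsucc]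
    push_cast
    field_simp
    ring
  push_cast
  rw [hratio, mul_assoc]
  refine mul_le_mul_of_nonneg_left ?_ (by positivity)
  rw [div_mul_eq_mul_div, le_div_iff₀ (by positivity)]
  nlinarith

lemma centralBinom_sq_le (k : ℕ) :
    (centralBinom k : ℝ) ^ 2 ≤ 16 ^ k / (π * (k + 1 / 4)) := by
  have hlim : Tendsto (fun k : ℕ => (centralBinom k : ℝ) ^ 2 / 16 ^ k * (k + 1 / 4))
      atTop (𝓝 π⁻¹) := by
    have h := tendsto_centralBinom_sq_div_mul.sub (tendsto_centralBinom_sq_div.div_const 4)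
    rw [zero_div, sub_zero] at h
    exact h.congr fun k => by ring
  have h := monotone_centralBinom_sq_div_mul.ge_of_tendsto hlim k
  rw [div_mul_eq_mul_div, div_le_iff₀ (by positivity)] at h
  rw [le_div_iff₀ (by positivity)]
  calc (centralBinom k : ℝ) ^ 2 * (π * (k + 1 / 4))
      = π * ((centralBinom k : ℝ) ^ 2 * (k + 1 / 4)) := by ring
    _ ≤ π * (π⁻¹ * 16 ^ k) := by gcongr
    _ = 16 ^ k := by field_simp

end Nat

lemma centralBinom_split_ratio_sq_le (A B c : ℕ) :
    ((1 / (((A : ℝ) + 1) * (B + 1)) * centralBinom A * centralBinom B * centralBinom c) /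
        ((A + B + c + 1) / (A + B + c + 2) * centralBinom (A + B + c + 1))) ^ 2 ≤
      (A + B + c + 2) / 4 /
        (π ^ 2 * (A + 1) ^ 2 * (A + 1 / 4) * (B + 1) ^ 2 * (B + 1 / 4) * (c + 1 / 4)) := by
  have := centralBinom_pos (A + B + c + 1)
  calc _ = (A + B + c + 2 : ℝ) ^ 2 * (centralBinom A : ℝ) ^ 2 * (centralBinom B : ℝ) ^ 2 *
          (centralBinom c : ℝ) ^ 2 / ((A + 1) ^ 2 * (B + 1) ^ 2 * (A + B + c + 1) ^ 2 *
          (centralBinom (A + B + c + 1) : ℝ) ^ 2) := by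
        field_simp
    _ ≤ (A + B + c + 2 : ℝ) ^ 2 * (16 ^ A / (π * (A + 1 / 4))) *
          (16 ^ B / (π * (B + 1 / 4))) * (16 ^ c / (π * (c + 1 / 4))) /
          ((A + 1) ^ 2 * (B + 1) ^ 2 * (A + B + c + 1) ^ 2 *
          (16 ^ (A + B + c + 1) / (π * ((A + B + c + 1 : ℕ) + 1 / 2)))) := by
        gcongr
        · exact centralBinom_sq_le A
        · exact centralBinom_sq_le B
        · exact centralBinom_sq_le c
        · exact sixteen_pow_div_le_centralBinom_sq _
    _ = (A + B + c + 2 : ℝ) ^ 2 * (A + B + c + 3 / 2) / (16 * (A + B + c + 1) ^ 2) /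
          (π ^ 2 * (A + 1) ^ 2 * (A + 1 / 4) * (B + 1) ^ 2 * (B + 1 / 4) * (c + 1 / 4)) := by
        push_cast
        field_simp
        ring
    _ ≤ _ := by
        gcongr ?_ / _
        rw [div_le_div_iff₀ (by positivity) (by positivity)]
        nlinarith

theorem stmt13_general (n a b c : ℕ) (ha : 1 ≤ a) (hb : 1 ≤ b)
    (habc : a + b + c = n) :
    ((1 / ((a : ℝ) * (b : ℝ))) * (Nat.choose (2 * a - 2) (a - 1) : ℝ) *
        (Nat.choose (2 * b - 2) (b - 1) : ℝ) * (Nat.choose (2 * c) c : ℝ)) /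
      ((((n : ℝ) - 1) / (n : ℝ)) * (Nat.choose (2 * n - 2) (n - 1) : ℝ)) ≤
    (1 / (2 * Real.pi)) * Real.sqrt (n : ℝ) /
      ((a : ℝ) * Real.sqrt ((a : ℝ) - 3/4) * (b : ℝ) * Real.sqrt ((b : ℝ) - 3/4) *
        Real.sqrt ((c : ℝ) + 1/4)) := by
  obtain ⟨A, rfl⟩ := Nat.exists_eq_add_of_le' ha
  obtain ⟨B, rfl⟩ := Nat.exists_eq_add_of_le' hb
  obtain rfl : n = A + B + c + 2 := by omega
  rw [show 2 * (A + 1) - 2 = 2 * A by omega, show 2 * (B + 1) - 2 = 2 * B by omega,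
    show 2 * (A + B + c + 2) - 2 = 2 * (A + B + c + 1) by omega,
    show A + B + c + 2 - 1 = A + B + c + 1 by omega]
  simp only [Nat.add_sub_cancel, ← centralBinom_eq_two_mul_choose]
  push_cast
  rw [show (A : ℝ) + B + c + 2 - 1 = A + B + c + 1 by ring,
    show (A : ℝ) + 1 - 3 / 4 = A + 1 / 4 by ring, show (B : ℝ) + 1 - 3 / 4 = B + 1 / 4 by ring,
    ← pow_le_pow_iff_left₀ (by positivity) (by positivity) two_ne_zero]
  refine (centralBinom_split_ratio_sq_le A B c).trans_eq ?_
  simp only [div_pow, mul_pow, sq_sqrt (by positivity : (0 : ℝ) ≤ A + 1 / 4),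
    sq_sqrt (by positivity : (0 : ℝ) ≤ B + 1 / 4), sq_sqrt (by positivity : (0 : ℝ) ≤ c + 1 / 4),
    sq_sqrt (by positivity : (0 : ℝ) ≤ A + B + c + 2)]
  field_simp
  ring

/-- Bound on the probability `P(a,b;n)` that a uniformly random rooted binary planar
tree with `n` unlabeled leaves and a uniformly random marked internal vertex has `a`
left-descendant leaves and `b` right-descendant leaves (with `c = n − a − b`):
`P(a,b;n) ≤ (1/(2π)) √n / (a √(a − 3/4) · b √(b − 3/4) · √(c + 1/4))`. -/
theorem stmt13 (n a b c : ℕ) (hn : 2 ≤ n) (ha : 1 ≤ a) (hb : 1 ≤ b)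
    (habc : a + b + c = n) :
    ((1 / ((a : ℝ) * (b : ℝ))) * (Nat.choose (2 * a - 2) (a - 1) : ℝ) *
        (Nat.choose (2 * b - 2) (b - 1) : ℝ) * (Nat.choose (2 * c) c : ℝ)) /
      ((((n : ℝ) - 1) / (n : ℝ)) * (Nat.choose (2 * n - 2) (n - 1) : ℝ)) ≤
    (1 / (2 * Real.pi)) * Real.sqrt (n : ℝ) /
      ((a : ℝ) * Real.sqrt ((a : ℝ) - 3/4) * (b : ℝ) * Real.sqrt ((b : ℝ) - 3/4) *
        Real.sqrt ((c : ℝ) + 1/4)) :=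
  stmt13_general n a b c ha hb habc
end

section
/- Let n ≥ 1 and let a_1, b_1, a_2, b_2 be nonnegative integers. Let N_tot be the number of quadruples (A_1, B_1, A_2, B_2) of subsets of an n-element set with |A_i| = a_i, |B_i| = b_i, and A_i ∩ B_i = ∅ for i = 1, 2; and let N_hit be the number of such quadruples that additionally satisfy A_1 ∩ A_2 ≠ ∅ and B_1 ∩ B_2 ≠ ∅. Then n · N_hit ≤ min(a_1 a_2, b_1 b_2) · N_tot; in particular n · N_hit ≤ sqrt(a_1 a_2 b_1 b_2) · N_tot. (Equivalently: the probability Q(a_1,b_1,a_2,b_2) that randomly chosen disjoint pairs (A_i, B_i) of the given sizes satisfy A_1 ∩ A_2 ≠ ∅ and B_1 ∩ B_2 ≠ ∅ is at most min(a_1 a_2 / n, b_1 b_2 / n) ≤ sqrt(a_1 a_2 b_1 b_2)/n.) -/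
set_option maxRecDepth 4000
set_option maxHeartbeats 1000000

open Finset


variable {n : ℕ}

def pairSet (n a b : ℕ) : Finset (Finset (Fin n) × Finset (Fin n)) :=
  Finset.univ.filter fun p => p.1.card = a ∧ p.2.card = b ∧ Disjoint p.1 p.2

def pairSetX (n a b : ℕ) (x : Fin n) : Finset (Finset (Fin n) × Finset (Fin n)) :=
  (pairSet n a b).filter fun p => x ∈ p.1

lemma card_pairSetX_const (a b : ℕ) (x y : Fin n) :
    (pairSetX n a b x).card = (pairSetX n a b y).card := by
  set σ := Equiv.swap x y with hσ
  apply Finset.card_equiv (Equiv.prodCongr σ.finsetCongr σ.finsetCongr)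
  intro p
  simp only [pairSetX, pairSet, mem_filter, mem_univ, true_and, Equiv.prodCongr_apply,
    Prod.map_fst, Prod.map_snd, Equiv.finsetCongr_apply]
  constructor
  · rintro ⟨⟨hc1, hc2, hd⟩, hx⟩
    refine ⟨⟨by simp [hc1], by simp [hc2], by simpa using hd⟩, ?_⟩
    rw [Finset.mem_map_equiv]
    simpa [hσ] using hx
  · rintro ⟨⟨hc1, hc2, hd⟩, hy⟩
    rw [Finset.mem_map_equiv] at hy
    simp only [hσ, Equiv.symm_swap, Equiv.swap_apply_right] at hy
    refine ⟨⟨by simpa using hc1, by simpa using hc2, by simpa using hd⟩, hy⟩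

lemma sum_card_pairSetX (a b : ℕ) :
    ∑ x : Fin n, (pairSetX n a b x).card = a * (pairSet n a b).card := by
  calc ∑ x : Fin n, (pairSetX n a b x).card
      = ∑ x : Fin n, ∑ p ∈ pairSet n a b, if x ∈ p.1 then 1 else 0 := by
        refine Finset.sum_congr rfl fun x _ => ?_
        rw [pairSetX, Finset.card_filter]
    _ = ∑ p ∈ pairSet n a b, ∑ x : Fin n, if x ∈ p.1 then 1 else 0 := Finset.sum_comm
    _ = ∑ p ∈ pairSet n a b, p.1.card := by
        refine Finset.sum_congr rfl fun p _ => ?_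
        rw [← Finset.card_filter]
        simp [Finset.filter_univ_mem]
    _ = ∑ _p ∈ pairSet n a b, a := Finset.sum_congr rfl fun p hp => by
        simp only [pairSet, mem_filter] at hp; exact hp.2.1
    _ = a * (pairSet n a b).card := by rw [Finset.sum_const, smul_eq_mul, mul_comm]

lemma n_mul_card_pairSetX (a b : ℕ) (x : Fin n) :
    n * (pairSetX n a b x).card = a * (pairSet n a b).card := by
  have : ∑ y : Fin n, (pairSetX n a b y).card = n * (pairSetX n a b x).card := by
    rw [Finset.sum_congr rfl (fun y _ => card_pairSetX_const a b y x)]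
    simp [Finset.card_univ, mul_comm]
  rw [← this, sum_card_pairSetX]

lemma card_filter_prod {α β : Type*} [Fintype α] [Fintype β] [DecidableEq α] [DecidableEq β]
    (s : Finset α) (t : Finset β) :
    (Finset.univ.filter fun q : α × β => q.1 ∈ s ∧ q.2 ∈ t).card = s.card * t.card := by
  rw [← Finset.univ_product_univ, Finset.filter_product, Finset.card_product]
  simp [Finset.filter_univ_mem]

lemma key_s15 (hn : 1 ≤ n) (a₁ b₁ a₂ b₂ : ℕ) :
    n * ((pairSet n a₁ b₁ ×ˢ pairSet n a₂ b₂).filter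
          fun q => (q.1.1 ∩ q.2.1).Nonempty).card
      ≤ a₁ * a₂ * ((pairSet n a₁ b₁).card * (pairSet n a₂ b₂).card) := by
  set Hit := (pairSet n a₁ b₁ ×ˢ pairSet n a₂ b₂).filter
          fun q => (q.1.1 ∩ q.2.1).Nonempty with hHit
  have hsub : Hit ⊆ Finset.univ.biUnion fun x : Fin n =>
      pairSetX n a₁ b₁ x ×ˢ pairSetX n a₂ b₂ x := by
    intro q hq
    simp only [hHit, mem_filter, Finset.mem_product] at hq
    obtain ⟨⟨h1, h2⟩, x, hx⟩ := hq
    simp only [Finset.mem_inter] at hx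
    simp only [Finset.mem_biUnion, Finset.mem_product]
    exact ⟨x, mem_univ x, by simp [pairSetX, mem_filter, h1, hx.1],
      by simp [pairSetX, mem_filter, h2, hx.2]⟩
  have h1 : Hit.card ≤ ∑ x : Fin n, (pairSetX n a₁ b₁ x).card * (pairSetX n a₂ b₂ x).card := by
    calc Hit.card ≤ _ := Finset.card_le_card hsub
    _ ≤ ∑ x : Fin n, (pairSetX n a₁ b₁ x ×ˢ pairSetX n a₂ b₂ x).card := Finset.card_biUnion_le
    _ = _ := Finset.sum_congr rfl fun x _ => Finset.card_product _ _
  have h2 : n * (n * Hit.card) ≤ n * (a₁ * a₂ * ((pairSet n a₁ b₁).card * (pairSet n a₂ b₂).card)) := by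
    calc n * (n * Hit.card) = n * n * Hit.card := by ring
    _ ≤ n * n * ∑ x : Fin n, (pairSetX n a₁ b₁ x).card * (pairSetX n a₂ b₂ x).card :=
        Nat.mul_le_mul_left _ h1
    _ = ∑ x : Fin n, (n * (pairSetX n a₁ b₁ x).card) * (n * (pairSetX n a₂ b₂ x).card) := by
        rw [Finset.mul_sum]; exact Finset.sum_congr rfl fun x _ => by ring
    _ = ∑ _x : Fin n, (a₁ * (pairSet n a₁ b₁).card) * (a₂ * (pairSet n a₂ b₂).card) :=
        Finset.sum_congr rfl fun x _ => by
          rw [n_mul_card_pairSetX, n_mul_card_pairSetX]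
    _ = n * (a₁ * a₂ * ((pairSet n a₁ b₁).card * (pairSet n a₂ b₂).card)) := by
        rw [Finset.sum_const, Finset.card_univ, Fintype.card_fin, smul_eq_mul]; ring
  exact Nat.le_of_mul_le_mul_left h2 (by omega)

lemma card_pairSet_comm (a b : ℕ) : (pairSet n a b).card = (pairSet n b a).card := by
  apply Finset.card_equiv (Equiv.prodComm _ _)
  intro p
  simp only [pairSet, mem_filter, mem_univ, true_and, Equiv.prodComm_apply, Prod.fst_swap,
    Prod.snd_swap]
  constructor
  · rintro ⟨h1, h2, h3⟩; exact ⟨h2, h1, h3.symm⟩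
  · rintro ⟨h1, h2, h3⟩; exact ⟨h2, h1, h3.symm⟩

/-- Bound on the probability `Q(a₁,b₁,a₂,b₂)`: among quadruples `(A₁, B₁, A₂, B₂)` of
subsets of `Fin n` with `|Aᵢ| = aᵢ`, `|Bᵢ| = bᵢ` and `Aᵢ ∩ Bᵢ = ∅` for `i = 1, 2`,
the number `N_hit` of quadruples with moreover `A₁ ∩ A₂ ≠ ∅` and `B₁ ∩ B₂ ≠ ∅`
satisfies `n · N_hit ≤ min(a₁a₂, b₁b₂) · N_tot`, where `N_tot` is the total number of
such quadruples; in particular `n · N_hit ≤ √(a₁a₂b₁b₂) · N_tot`. -/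
theorem stmt15 (n : ℕ) (hn : 1 ≤ n) (a₁ b₁ a₂ b₂ : ℕ)
    (Ntot Nhit : ℕ)
    (hNtot : Ntot = (Finset.univ.filter
      fun q : (Finset (Fin n) × Finset (Fin n)) × (Finset (Fin n) × Finset (Fin n)) =>
        q.1.1.card = a₁ ∧ q.1.2.card = b₁ ∧ q.2.1.card = a₂ ∧ q.2.2.card = b₂ ∧
        Disjoint q.1.1 q.1.2 ∧ Disjoint q.2.1 q.2.2).card)
    (hNhit : Nhit = (Finset.univ.filter
      fun q : (Finset (Fin n) × Finset (Fin n)) × (Finset (Fin n) × Finset (Fin n)) =>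
        (q.1.1.card = a₁ ∧ q.1.2.card = b₁ ∧ q.2.1.card = a₂ ∧ q.2.2.card = b₂ ∧
          Disjoint q.1.1 q.1.2 ∧ Disjoint q.2.1 q.2.2) ∧
        (q.1.1 ∩ q.2.1).Nonempty ∧ (q.1.2 ∩ q.2.2).Nonempty).card) :
    n * Nhit ≤ min (a₁ * a₂) (b₁ * b₂) * Ntot ∧
    (n : ℝ) * (Nhit : ℝ) ≤
      Real.sqrt ((a₁ : ℝ) * (a₂ : ℝ) * (b₁ : ℝ) * (b₂ : ℝ)) * (Ntot : ℝ) := by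
  -- N_tot as product
  have hTot : Ntot = (pairSet n a₁ b₁).card * (pairSet n a₂ b₂).card := by
    rw [hNtot, ← Finset.card_product]
    congr 1
    ext q
    simp only [mem_filter, mem_univ, true_and, Finset.mem_product, pairSet]
    tauto
  -- a-bound
  have hA : n * Nhit ≤ a₁ * a₂ * Ntot := by
    have hsub : (Finset.univ.filter
        fun q : (Finset (Fin n) × Finset (Fin n)) × (Finset (Fin n) × Finset (Fin n)) =>
          (q.1.1.card = a₁ ∧ q.1.2.card = b₁ ∧ q.2.1.card = a₂ ∧ q.2.2.card = b₂ ∧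
            Disjoint q.1.1 q.1.2 ∧ Disjoint q.2.1 q.2.2) ∧
          (q.1.1 ∩ q.2.1).Nonempty ∧ (q.1.2 ∩ q.2.2).Nonempty)
        ⊆ (pairSet n a₁ b₁ ×ˢ pairSet n a₂ b₂).filter fun q => (q.1.1 ∩ q.2.1).Nonempty := by
      intro q hq
      simp only [mem_filter, mem_univ, true_and, Finset.mem_product, pairSet] at hq ⊢
      tauto
    have h1 : Nhit ≤ ((pairSet n a₁ b₁ ×ˢ pairSet n a₂ b₂).filter
        fun q => (q.1.1 ∩ q.2.1).Nonempty).card := by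
      rw [hNhit]; exact Finset.card_le_card hsub
    have h2 := key_s15 hn a₁ b₁ a₂ b₂
    rw [← hTot] at h2
    exact le_trans (Nat.mul_le_mul_left _ h1) h2
  -- b-bound via swapping the roles of A and B
  have hB : n * Nhit ≤ b₁ * b₂ * Ntot := by
    have hcard : Nhit = ((pairSet n b₁ a₁ ×ˢ pairSet n b₂ a₂).filter
        fun q => (q.1.1 ∩ q.2.1).Nonempty ∧ (q.1.2 ∩ q.2.2).Nonempty).card := by
      rw [hNhit]
      apply Finset.card_equiv (Equiv.prodCongr (Equiv.prodComm _ _) (Equiv.prodComm _ _))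
      intro q
      simp only [mem_filter, mem_univ, true_and, Finset.mem_product, pairSet,
        Equiv.prodCongr_apply, Prod.map_fst, Prod.map_snd, Equiv.prodComm_apply,
        Prod.fst_swap, Prod.snd_swap]
      constructor
      · rintro ⟨⟨h1, h2, h3, h4, h5, h6⟩, h7, h8⟩
        exact ⟨⟨⟨h2, h1, h5.symm⟩, ⟨h4, h3, h6.symm⟩⟩, h8, h7⟩
      · rintro ⟨⟨⟨h1, h2, h3⟩, h4, h5, h6⟩, h7, h8⟩
        exact ⟨⟨h2, h1, h5, h4, h3.symm, h6.symm⟩, h8, h7⟩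
    have h1 : Nhit ≤ ((pairSet n b₁ a₁ ×ˢ pairSet n b₂ a₂).filter
        fun q => (q.1.1 ∩ q.2.1).Nonempty).card := by
      rw [hcard]
      apply Finset.card_le_card
      intro q hq
      rw [mem_filter] at hq ⊢
      exact ⟨hq.1, hq.2.1⟩
    have h2 := key_s15 hn b₁ a₁ b₂ a₂
    rw [← card_pairSet_comm a₁ b₁, ← card_pairSet_comm a₂ b₂, ← hTot] at h2
    exact le_trans (Nat.mul_le_mul_left _ h1) h2
  have hmin : n * Nhit ≤ min (a₁ * a₂) (b₁ * b₂) * Ntot := by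
    rcases le_total (a₁ * a₂) (b₁ * b₂) with h | h
    · rw [min_eq_left h]; exact hA
    · rw [min_eq_right h]; exact hB
  refine ⟨hmin, ?_⟩
  have hsq : (min ((a₁:ℝ) * a₂) ((b₁:ℝ) * b₂)) ≤
      Real.sqrt ((a₁ : ℝ) * (a₂ : ℝ) * (b₁ : ℝ) * (b₂ : ℝ)) := by
    have hx : (0:ℝ) ≤ (a₁:ℝ) * a₂ := by positivity
    have hy : (0:ℝ) ≤ (b₁:ℝ) * b₂ := by positivity
    have hmin0 : (0:ℝ) ≤ min ((a₁:ℝ) * a₂) ((b₁:ℝ) * b₂) := le_min hx hy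
    rw [Real.le_sqrt hmin0 (by positivity)]
    calc min ((a₁:ℝ) * a₂) ((b₁:ℝ) * b₂) ^ 2
        = min ((a₁:ℝ) * a₂) ((b₁:ℝ) * b₂) * min ((a₁:ℝ) * a₂) ((b₁:ℝ) * b₂) := sq _
      _ ≤ ((a₁:ℝ) * a₂) * ((b₁:ℝ) * b₂) :=
          mul_le_mul (min_le_left _ _) (min_le_right _ _) hmin0 hx
      _ = (a₁ : ℝ) * (a₂ : ℝ) * (b₁ : ℝ) * (b₂ : ℝ) := by ring
  calc (n : ℝ) * Nhit = ((n * Nhit : ℕ) : ℝ) := by push_cast; ring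
    _ ≤ ((min (a₁ * a₂) (b₁ * b₂) * Ntot : ℕ) : ℝ) := Nat.cast_le.mpr hmin
    _ = (min ((a₁:ℝ) * a₂) ((b₁:ℝ) * b₂)) * (Ntot : ℝ) := by push_cast; ring
    _ ≤ Real.sqrt ((a₁ : ℝ) * (a₂ : ℝ) * (b₁ : ℝ) * (b₂ : ℝ)) * (Ntot : ℝ) :=
        mul_le_mul_of_nonneg_right hsq (Nat.cast_nonneg _)
end
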